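/- For each natural number a ≥ 1, the a-th subdiagonal of the reachability matrix is periodic with period 2a+1: for all n > a, whether (n, n−a) is reachable from (1,1) under the maps Ĝ(x,y)=(x+y,y) and Ŝ(x,y)=(3x−2y+1,2x−y+1) depends only on n mod (2a+1); i.e., (n, n−a) is reachable iff (n + 2a+1, n+a+1) is reachable. -/

import Mathlib

/-!
`Ŝ` maps `(n, n - a)` to `(n + (2a + 1), n + a + 1)`, which gives one direction. Conversely, the
latter point is not `(1, 1)`, and it is not `Ĝ (x, y)` for a reachable `(x, y)`: reachable points
satisfy `1 ≤ y ≤ x`, and `x = a`, `y = n + a + 1` would violate this. So it is `Ŝ` of a reachable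
point, which by injectivity of `Ŝ` is `(n, n - a)`.
-/

def Ghat (p : ℤ × ℤ) : ℤ × ℤ := (p.1 + p.2, p.2)

def Shat (p : ℤ × ℤ) : ℤ × ℤ := (3 * p.1 - 2 * p.2 + 1, 2 * p.1 - p.2 + 1)

def applyWord (w : List Bool) (p : ℤ × ℤ) : ℤ × ℤ :=
  w.foldr (fun b q => if b then Shat q else Ghat q) p

def Reachable (p : ℤ × ℤ) : Prop := ∃ w : List Bool, applyWord w (1, 1) = p

@[simp]
lemma applyWord_nil (p : ℤ × ℤ) : applyWord [] p = p := rfl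

@[simp]
lemma applyWord_cons (b : Bool) (w : List Bool) (p : ℤ × ℤ) :
    applyWord (b :: w) p = if b then Shat (applyWord w p) else Ghat (applyWord w p) := rfl

lemma Shat_injective : Function.Injective Shat := by
  intro p q h
  simp only [Shat, Prod.ext_iff] at h
  ext <;> omega

lemma Shat_subdiagonal (a n : ℤ) : Shat (n, n - a) = (n + (2 * a + 1), n + a + 1) := by
  simp only [Shat, Prod.ext_iff]
  constructor <;> ring

namespace Reachable

lemma shat {p : ℤ × ℤ} (hp : Reachable p) : Reachable (Shat p) := by
  obtain ⟨w, rfl⟩ := hp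
  exact ⟨true :: w, rfl⟩

lemma one_le_snd_le_fst {p : ℤ × ℤ} (hp : Reachable p) : 1 ≤ p.2 ∧ p.2 ≤ p.1 := by
  obtain ⟨w, rfl⟩ := hp
  induction w with
  | nil => simp
  | cons b w ih =>
    cases b <;> simp only [applyWord_cons, Bool.false_eq_true, if_true, if_false, Ghat, Shat] <;>
      omega

lemma eq_one_one_or_ghat_or_shat {p : ℤ × ℤ} (hp : Reachable p) :
    p = (1, 1) ∨ (∃ q, Reachable q ∧ p = Ghat q) ∨ ∃ q, Reachable q ∧ p = Shat q := by
  obtain ⟨_ | ⟨b, w⟩, rfl⟩ := hp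
  · exact Or.inl rfl
  · cases b
    · exact Or.inr (Or.inl ⟨_, ⟨w, rfl⟩, rfl⟩)
    · exact Or.inr (Or.inr ⟨_, ⟨w, rfl⟩, rfl⟩)

end Reachable

theorem subdiagonal_periodic_general (a n : ℤ) (han : a < n) :
    Reachable (n, n - a) ↔ Reachable (n + (2 * a + 1), n + a + 1) := by
  rw [← Shat_subdiagonal]
  refine ⟨Reachable.shat, fun h => ?_⟩
  rcases h.eq_one_one_or_ghat_or_shat with h1 | ⟨q, hq, hqG⟩ | ⟨q, hq, hqS⟩
  · simp only [Shat, Prod.ext_iff] at h1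
    omega
  · have := hq.one_le_snd_le_fst
    simp only [Shat, Ghat, Prod.ext_iff] at hqG
    omega
  · exact Shat_injective hqS ▸ hq

theorem subdiagonal_periodic (a n : ℤ) (ha : 1 ≤ a) (han : a < n) :
    Reachable (n, n - a) ↔ Reachable (n + (2 * a + 1), n + a + 1) :=
  subdiagonal_periodic_general a n han
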